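/- Let 0 < α ≤ π with α ≠ 2π/3. Then there exists ε₀ > 0 such that for every ε with 0 < ε ≤ ε₀, the chromatic number of the ε-distance graph D_ε(α) on the whole circle S¹ is at most 3. -/

import Mathlib

/-- The circle `S¹ = ℝ/2πℤ` with its quotient metric. -/
abbrev Circle2 : Type := AddCircle (2 * Real.pi)

instance : Fact (0 < 2 * Real.pi) := ⟨by positivity⟩

/-- `X` is an `r`-net of the circle. -/
def cIsNet (r : ℝ) (X : Set Circle2) : Prop :=
  ∀ y : Circle2, ∃ x ∈ X, dist x y ≤ r

/-- The ε-distance graph with parameter α on a set `X ⊆ S¹`: distinct points are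
adjacent iff their distance lies in `[α - ε, α + ε]`. -/
def cDistGraph (X : Set Circle2) (α ε : ℝ) : SimpleGraph X where
  Adj x y := x ≠ y ∧ α - ε ≤ dist x.1 y.1 ∧ dist x.1 y.1 ≤ α + ε
  symm := ⟨by
    intro x y h
    exact ⟨h.1.symm, by rw [dist_comm]; exact h.2.1, by rw [dist_comm]; exact h.2.2⟩⟩
  loopless := ⟨fun x h => h.1 rfl⟩

/-- The ε-distance graph with parameter α on the whole circle `S¹`. -/
def cDistGraphAll (α ε : ℝ) : SimpleGraph Circle2 where
  Adj x y := x ≠ y ∧ α - ε ≤ dist x y ∧ dist x y ≤ α + ε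
  symm := ⟨by
    intro x y h
    exact ⟨h.1.symm, by rw [dist_comm]; exact h.2.1, by rw [dist_comm]; exact h.2.2⟩⟩
  loopless := ⟨fun x h => h.1 rfl⟩

/-!
Choose `m ≥ 1` with `2π < 3mα < 4π` (possible because `3α < 4π` and `3α ≠ 2π`) and put
`ℓ = 2π / (3m)`, so that `ℓ < α < 2ℓ`. Cut the circle into the `3m` arcs `[kℓ, (k+1)ℓ)` and
colour arc `k` by `k mod 3`; this is well defined since the number of arcs is divisible by `3`.
Two points of the same colour lie in one arc, at distance `< ℓ`, or have two whole arcs between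
them, at distance `> 2ℓ`. Hence for `ε < min (α - ℓ) (2ℓ - α)` no edge is monochromatic.
-/

open Real

theorem exists_nat_mul_mem_Ioo {p β : ℝ} (hβ : 0 < β) (hβp : β ≠ p) (hβ2p : β < 2 * p) :
    ∃ m : ℕ, p < m * β ∧ m * β < 2 * p := by
  rcases hβp.lt_or_gt with hβp | hpβ
  · have hp : 0 < p := hβ.trans hβp
    refine ⟨⌊p / β⌋₊ + 1, ?_, ?_⟩
    · rw [← div_lt_iff₀ hβ]
      exact_mod_cast Nat.lt_floor_add_one (p / β)
    · have hfloor : (⌊p / β⌋₊ : ℝ) * β ≤ p :=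
        (le_div_iff₀ hβ).mp (Nat.floor_le (div_nonneg hp.le hβ.le))
      push_cast
      linarith
  · exact ⟨1, by simpa using hpβ, by simpa using hβ2p⟩

theorem abs_sub_lt_one_or_two_lt_abs_sub_of_floor_modEq {x y : ℝ} (h : ⌊x⌋ ≡ ⌊y⌋ [ZMOD 3]) :
    |x - y| < 1 ∨ 2 < |x - y| := by
  obtain ⟨t, ht⟩ := h.symm.dvd
  have hdiff : ((⌊x⌋ - ⌊y⌋ : ℤ) : ℝ) = 3 * t := by exact_mod_cast ht
  push_cast at hdiff
  have := Int.floor_le x; have := Int.lt_floor_add_one x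
  have := Int.floor_le y; have := Int.lt_floor_add_one y
  rcases lt_trichotomy t 0 with ht | rfl | ht
  · have : (t : ℝ) ≤ -1 := by exact_mod_cast Int.le_sub_one_of_lt ht
    right; rw [abs_of_neg (by linarith)]; linarith
  · simp only [Int.cast_zero, mul_zero] at hdiff
    left; rw [abs_lt]; constructor <;> linarith
  · have : (1 : ℝ) ≤ t := by exact_mod_cast ht
    right; rw [abs_of_pos (by linarith)]; linarith

noncomputable def stripeColor (ℓ u : ℝ) : ZMod 3 := ⌊u / ℓ⌋

theorem stripeColor_periodic {ℓ : ℝ} (hℓ : ℓ ≠ 0) (m : ℕ) :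
    Function.Periodic (stripeColor ℓ) (3 * m * ℓ) := by
  intro u
  have hshift : (u + 3 * m * ℓ) / ℓ = u / ℓ + ((3 * m : ℤ) : ℝ) := by
    push_cast; field_simp
  rw [stripeColor, stripeColor, hshift, Int.floor_add_intCast, Int.cast_add, Int.cast_mul,
    show ((3 : ℤ) : ZMod 3) = 0 from rfl, zero_mul, add_zero]

theorem abs_sub_lt_or_lt_abs_sub_of_stripeColor_eq {ℓ u v : ℝ} (hℓ : 0 < ℓ)
    (h : stripeColor ℓ u = stripeColor ℓ v) : |u - v| < ℓ ∨ 2 * ℓ < |u - v| := by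
  have hscale : |u / ℓ - v / ℓ| = |u - v| / ℓ := by
    rw [← sub_div, abs_div, abs_of_pos hℓ]
  have := abs_sub_lt_one_or_two_lt_abs_sub_of_floor_modEq ((ZMod.intCast_eq_intCast_iff _ _ 3).mp h)
  rwa [hscale, div_lt_iff₀ hℓ, lt_div_iff₀ hℓ, one_mul] at this

theorem AddCircle.exists_coe_eq_dist_eq_abs_sub {T : ℝ} (u : ℝ) (y : AddCircle T) :
    ∃ v : ℝ, (v : AddCircle T) = y ∧ dist (u : AddCircle T) y = |u - v| := by
  induction y using QuotientAddGroup.induction_on with | H w => ?_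
  refine ⟨w + round (T⁻¹ * (u - w)) * T, ?_, ?_⟩
  · simp
  · rw [dist_eq_norm, ← AddCircle.coe_sub, AddCircle.norm_eq]
    ring_nf

theorem cDistGraphAll_colorable_three {α ε ℓ : ℝ} {m : ℕ} (hm : 3 * m * ℓ = 2 * π)
    (hlow : ℓ < α - ε) (hhigh : α + ε < 2 * ℓ) : (cDistGraphAll α ε).Colorable 3 := by
  have hℓ : 0 < ℓ := pos_of_mul_pos_right (hm ▸ two_pi_pos) (by positivity)
  have hper : Function.Periodic (stripeColor ℓ) (2 * π) := hm ▸ stripeColor_periodic hℓ.ne' m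
  refine ⟨SimpleGraph.Coloring.mk hper.lift fun {x y} hadj hcol => ?_⟩
  obtain ⟨-, hdist_lo, hdist_hi⟩ := hadj
  induction x using QuotientAddGroup.induction_on with | H u => ?_
  obtain ⟨v, rfl, hdist⟩ := AddCircle.exists_coe_eq_dist_eq_abs_sub u y
  rw [hper.lift_coe, hper.lift_coe] at hcol
  rcases abs_sub_lt_or_lt_abs_sub_of_stripeColor_eq hℓ hcol with h | h <;> linarith

/-- for `0 < α ≤ π`, `α ≠ 2π/3`, the ε-distance graph on the whole circle is
`3`-colorable for all small `ε > 0`. -/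
theorem stmt_11 (α : ℝ) (hα0 : 0 < α) (hαπ : α ≤ Real.pi) (hα23 : α ≠ 2 * Real.pi / 3) :
    ∃ ε₀ > (0 : ℝ), ∀ ε : ℝ, 0 < ε → ε ≤ ε₀ →
      (cDistGraphAll α ε).chromaticNumber ≤ 3 := by
  obtain ⟨m, hm_lo, hm_hi⟩ : ∃ m : ℕ, 2 * π < m * (3 * α) ∧ m * (3 * α) < 2 * (2 * π) :=
    exists_nat_mul_mem_Ioo (by positivity) (by contrapose! hα23; linarith) (by linarith [pi_pos])
  have hm : (0 : ℝ) < 3 * m := by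
    have : (0 : ℝ) < m := pos_of_mul_pos_left (two_pi_pos.trans hm_lo) (by positivity)
    positivity
  set ℓ := 2 * π / (3 * m)
  have hℓ : 3 * m * ℓ = 2 * π := mul_div_cancel₀ _ hm.ne'
  have hℓα : ℓ < α := by rw [div_lt_iff₀ hm]; linarith
  have hαℓ : α < 2 * ℓ := by rw [mul_div_assoc', lt_div_iff₀ hm]; linarith
  refine ⟨min (α - ℓ) (2 * ℓ - α) / 2, by positivity, fun ε _ hε => ?_⟩
  have hε₁ := hε.trans (div_le_div_of_nonneg_right (min_le_left (α - ℓ) (2 * ℓ - α)) two_pos.le)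
  have hε₂ := hε.trans (div_le_div_of_nonneg_right (min_le_right (α - ℓ) (2 * ℓ - α)) two_pos.le)
  exact (cDistGraphAll_colorable_three hℓ (by linarith) (by linarith)).chromaticNumber_le
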